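/- arXiv:2412.13854 — 2 statements merged into one kernel-verified Lean document; each statement's English description precedes it below -/
import Mathlib

section
/- Let Ω ⊂ ℂ be open and η : Ω → [0,∞) measurable such that ∫_Ω φ² η ≤ ∫_Ω |∇φ|² for all real-valued φ ∈ C_c^∞(Ω). Then for every complex-valued ψ ∈ C_c^∞(Ω), ∫_Ω |ψ|² η ≤ 4 ∫_Ω |∂ψ/∂z|². -/
open MeasureTheory Complex

private lemma norm_sq_eq' (z : ℂ) : ‖z‖ ^ 2 = z.re ^ 2 + z.im ^ 2 := by
  rw [Complex.sq_norm, Complex.normSq_apply]; ring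

private lemma clm_norm_sq (ℓ : ℂ →L[ℝ] ℝ) : ‖ℓ‖ ^ 2 = ℓ 1 ^ 2 + ℓ I ^ 2 := by
  set c : ℂ := ⟨ℓ 1, ℓ I⟩ with hcdef
  have hc : ℓ = innerSL ℝ c := by
    ext z
    have hz : z = z.re • (1 : ℂ) + z.im • I := by
      simp [Complex.ext_iff]
    rw [innerSL_apply_apply, Complex.inner]
    conv_lhs => rw [hz]
    rw [map_add, _root_.map_smul, _root_.map_smul]
    simp [hcdef, Complex.ext_iff, smul_eq_mul]
  have h2 : ‖ℓ‖ = ‖c‖ := by rw [hc, innerSL_apply_norm]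
  rw [h2, norm_sq_eq']

private lemma key_alg (a b : ℂ) :
    ‖a - I * b‖ ^ 2 = (‖a‖ ^ 2 + ‖b‖ ^ 2) + 2 * (a.re * b.im - a.im * b.re) := by
  rw [norm_sq_eq' a, norm_sq_eq' b, norm_sq_eq']
  simp only [Complex.sub_re, Complex.sub_im, Complex.mul_re, Complex.mul_im,
    Complex.I_re, Complex.I_im]
  ring

private lemma cross_integral (u v : ℂ → ℝ) (hu : ContDiff ℝ (⊤ : ℕ∞) u) (hv : ContDiff ℝ (⊤ : ℕ∞) v)
    (hcu : HasCompactSupport u) (hcv : HasCompactSupport v) :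
    ∫ x, fderiv ℝ u x 1 * fderiv ℝ v x I = ∫ x, fderiv ℝ u x I * fderiv ℝ v x 1 := by
  have hdu : Differentiable ℝ u := hu.differentiable (by simp)
  have hfv : ContDiff ℝ (⊤ : ℕ∞) (fderiv ℝ v) := hv.fderiv_right (by simp)
  have hfu : ContDiff ℝ (⊤ : ℕ∞) (fderiv ℝ u) := hu.fderiv_right (by simp)
  have hcfv : HasCompactSupport (fderiv ℝ v) := hcv.fderiv (𝕜 := ℝ)
  set g1 : ℂ → ℝ := fun x => fderiv ℝ v x 1 with hg1
  set gI : ℂ → ℝ := fun x => fderiv ℝ v x I with hgI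
  have hg1s : ContDiff ℝ (⊤ : ℕ∞) g1 := hfv.clm_apply contDiff_const
  have hgIs : ContDiff ℝ (⊤ : ℕ∞) gI := hfv.clm_apply contDiff_const
  have hg1c : HasCompactSupport g1 :=
    hcfv.comp_left (g := fun ℓ : ℂ →L[ℝ] ℝ => ℓ 1) rfl
  have hgIc : HasCompactSupport gI :=
    hcfv.comp_left (g := fun ℓ : ℂ →L[ℝ] ℝ => ℓ I) rfl
  have hsymm : ∀ x, fderiv ℝ gI x 1 = fderiv ℝ g1 x I := by
    intro x
    have hsnd := ((hv.contDiffAt (x := x)).isSymmSndFDerivAt (n := (⊤ : ℕ∞)) (by rw [minSmoothness_of_isRCLikeNormedField]; show ((2 : ℕ∞) : WithTop ℕ∞) ≤ ((⊤ : ℕ∞) : WithTop ℕ∞); exact WithTop.coe_le_coe.mpr le_top)) 1 I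
    have eI : fderiv ℝ gI x = (ContinuousLinearMap.apply ℝ ℝ I).comp (fderiv ℝ (fderiv ℝ v) x) :=
      (((ContinuousLinearMap.apply ℝ ℝ I).hasFDerivAt).comp x
        ((hfv.differentiable (by simp) x).hasFDerivAt)).fderiv
    have e1 : fderiv ℝ g1 x
        = (ContinuousLinearMap.apply ℝ ℝ (1 : ℂ)).comp (fderiv ℝ (fderiv ℝ v) x) :=
      (((ContinuousLinearMap.apply ℝ ℝ (1 : ℂ)).hasFDerivAt).comp x
        ((hfv.differentiable (by simp) x).hasFDerivAt)).fderiv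
    rw [eI, e1]
    simpa using hsnd
  have hcu1 : Continuous fun x => fderiv ℝ u x 1 := hfu.continuous.clm_apply continuous_const
  have hcuI : Continuous fun x => fderiv ℝ u x I := hfu.continuous.clm_apply continuous_const
  have hcgI1 : Continuous fun x => fderiv ℝ gI x 1 :=
    (hgIs.fderiv_right (m := (⊤ : ℕ∞)) (by simp)).continuous.clm_apply continuous_const
  have hcg1I : Continuous fun x => fderiv ℝ g1 x I :=
    (hg1s.fderiv_right (m := (⊤ : ℕ∞)) (by simp)).continuous.clm_apply continuous_const
  have int1 : ∫ x, u x * fderiv ℝ gI x 1 = - ∫ x, fderiv ℝ u x 1 * gI x := by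
    apply integral_mul_fderiv_eq_neg_fderiv_mul_of_integrable
    · exact ((hcu1.mul hgIs.continuous).integrable_of_hasCompactSupport hgIc.mul_left)
    · exact ((hu.continuous.mul hcgI1).integrable_of_hasCompactSupport hcu.mul_right)
    · exact ((hu.continuous.mul hgIs.continuous).integrable_of_hasCompactSupport hcu.mul_right)
    · exact fun x _ => hdu x
    · exact fun x _ => hgIs.differentiable (by simp) x
  have int2 : ∫ x, u x * fderiv ℝ g1 x I = - ∫ x, fderiv ℝ u x I * g1 x := by
    apply integral_mul_fderiv_eq_neg_fderiv_mul_of_integrable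
    · exact ((hcuI.mul hg1s.continuous).integrable_of_hasCompactSupport hg1c.mul_left)
    · exact ((hu.continuous.mul hcg1I).integrable_of_hasCompactSupport hcu.mul_right)
    · exact ((hu.continuous.mul hg1s.continuous).integrable_of_hasCompactSupport hcu.mul_right)
    · exact fun x _ => hdu x
    · exact fun x _ => hg1s.differentiable (by simp) x
  have : ∫ x, u x * fderiv ℝ gI x 1 = ∫ x, u x * fderiv ℝ g1 x I := by
    congr 1; ext x; rw [hsymm x]
  have h2 := int1.symm.trans (this.trans int2)
  exact neg_injective h2

/-- If the Hardy-type inequality `∫_Ω φ² η ≤ ∫_Ω |∇φ|²` holds for all real-valued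
`φ ∈ C_c^∞(Ω)`, then for every complex-valued `ψ ∈ C_c^∞(Ω)`,
`∫_Ω |ψ|² η ≤ 4 ∫_Ω |∂ψ/∂z|²`, where `∂ψ/∂z = (1/2)(ψ_x − i ψ_y)`. -/
theorem hardy_complex_of_hardy_real
    (Ω : Set ℂ) (hΩ : IsOpen Ω) (η : ℂ → ℝ)
    (hη_meas : Measurable η) (hη_nonneg : ∀ x ∈ Ω, 0 ≤ η x)
    (hHardy : ∀ φ : ℂ → ℝ, ContDiff ℝ (⊤ : ℕ∞) φ → HasCompactSupport φ → tsupport φ ⊆ Ω →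
      ∫ x in Ω, (φ x) ^ 2 * η x ≤ ∫ x in Ω, ‖fderiv ℝ φ x‖ ^ 2) :
    ∀ ψ : ℂ → ℂ, ContDiff ℝ (⊤ : ℕ∞) ψ → HasCompactSupport ψ → tsupport ψ ⊆ Ω →
      ∫ x in Ω, ‖ψ x‖ ^ 2 * η x
        ≤ 4 * ∫ x in Ω,
            ‖(1 / 2 : ℂ) * (fderiv ℝ ψ x 1 - Complex.I * fderiv ℝ ψ x Complex.I)‖ ^ 2 := by
  intro ψ hψ hψc hψΩ
  set u : ℂ → ℝ := fun x => (ψ x).re with hudef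
  set v : ℂ → ℝ := fun x => (ψ x).im with hvdef
  have hu : ContDiff ℝ (⊤ : ℕ∞) u := Complex.reCLM.contDiff.comp hψ
  have hv : ContDiff ℝ (⊤ : ℕ∞) v := Complex.imCLM.contDiff.comp hψ
  have hcu : HasCompactSupport u := hψc.comp_left (g := Complex.re) Complex.zero_re
  have hcv : HasCompactSupport v := hψc.comp_left (g := Complex.im) Complex.zero_im
  have hsubu : tsupport u ⊆ Ω := by
    refine subset_trans (closure_mono ?_) hψΩ
    intro x hx
    simp only [Function.mem_support] at hx ⊢
    intro h; exact hx (by simp [hudef, h])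
  have hsubv : tsupport v ⊆ Ω := by
    refine subset_trans (closure_mono ?_) hψΩ
    intro x hx
    simp only [Function.mem_support] at hx ⊢
    intro h; exact hx (by simp [hvdef, h])
  have hψd : Differentiable ℝ ψ := hψ.differentiable (by simp)
  have hud : ∀ x (w : ℂ), fderiv ℝ u x w = (fderiv ℝ ψ x w).re := by
    intro x w
    have h : fderiv ℝ u x = Complex.reCLM.comp (fderiv ℝ ψ x) :=
      (Complex.reCLM.hasFDerivAt.comp x (hψd x).hasFDerivAt).fderiv
    rw [h]; rfl
  have hvd : ∀ x (w : ℂ), fderiv ℝ v x w = (fderiv ℝ ψ x w).im := by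
    intro x w
    have h : fderiv ℝ v x = Complex.imCLM.comp (fderiv ℝ ψ x) :=
      (Complex.imCLM.hasFDerivAt.comp x (hψd x).hasFDerivAt).fderiv
    rw [h]; rfl
  have hDc : Continuous (fderiv ℝ ψ) := (hψ.fderiv_right (m := (⊤ : ℕ∞)) (by simp)).continuous
  have hDcs : HasCompactSupport (fderiv ℝ ψ) := hψc.fderiv (𝕜 := ℝ)
  have hD0 : ∀ x, x ∉ Ω → fderiv ℝ ψ x = 0 := by
    intro x hx
    by_contra h
    exact hx (hψΩ (support_fderiv_subset (𝕜 := ℝ) (Function.mem_support.2 h)))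
  -- continuity and integrability of main integrands
  have hac : Continuous fun x => fderiv ℝ ψ x 1 := hDc.clm_apply continuous_const
  have hbc : Continuous fun x => fderiv ℝ ψ x I := hDc.clm_apply continuous_const
  have hFc : Continuous fun x => ‖fderiv ℝ ψ x 1‖ ^ 2 + ‖fderiv ℝ ψ x I‖ ^ 2 :=
    ((hac.norm.pow 2).add (hbc.norm.pow 2))
  have hFcs : HasCompactSupport fun x => ‖fderiv ℝ ψ x 1‖ ^ 2 + ‖fderiv ℝ ψ x I‖ ^ 2 :=
    hDcs.comp_left (g := fun ℓ : ℂ →L[ℝ] ℂ => ‖ℓ 1‖ ^ 2 + ‖ℓ I‖ ^ 2) (by simp)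
  have hFint : Integrable fun x => ‖fderiv ℝ ψ x 1‖ ^ 2 + ‖fderiv ℝ ψ x I‖ ^ 2 :=
    hFc.integrable_of_hasCompactSupport hFcs
  have hGc : Continuous fun x =>
      (fderiv ℝ ψ x 1).re * (fderiv ℝ ψ x I).im - (fderiv ℝ ψ x 1).im * (fderiv ℝ ψ x I).re :=
    ((Complex.continuous_re.comp hac).mul (Complex.continuous_im.comp hbc)).sub
      ((Complex.continuous_im.comp hac).mul (Complex.continuous_re.comp hbc))
  have hGcs : HasCompactSupport fun x =>
      (fderiv ℝ ψ x 1).re * (fderiv ℝ ψ x I).im - (fderiv ℝ ψ x 1).im * (fderiv ℝ ψ x I).re :=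
    hDcs.comp_left
      (g := fun ℓ : ℂ →L[ℝ] ℂ => (ℓ 1).re * (ℓ I).im - (ℓ 1).im * (ℓ I).re) (by simp)
  have hGint : Integrable fun x =>
      (fderiv ℝ ψ x 1).re * (fderiv ℝ ψ x I).im - (fderiv ℝ ψ x 1).im * (fderiv ℝ ψ x I).re :=
    hGc.integrable_of_hasCompactSupport hGcs
  -- the cross terms integrate to zero
  have hfu : ContDiff ℝ (⊤ : ℕ∞) (fderiv ℝ u) := hu.fderiv_right (by simp)
  have hfv : ContDiff ℝ (⊤ : ℕ∞) (fderiv ℝ v) := hv.fderiv_right (by simp)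
  have hint_uv : Integrable fun x => fderiv ℝ u x 1 * fderiv ℝ v x I :=
    ((hfu.continuous.clm_apply continuous_const).mul
      (hfv.continuous.clm_apply continuous_const)).integrable_of_hasCompactSupport
      (((hcu.fderiv (𝕜 := ℝ)).comp_left (g := fun ℓ : ℂ →L[ℝ] ℝ => ℓ 1) rfl).mul_right)
  have hint_vu : Integrable fun x => fderiv ℝ v x 1 * fderiv ℝ u x I :=
    ((hfv.continuous.clm_apply continuous_const).mul
      (hfu.continuous.clm_apply continuous_const)).integrable_of_hasCompactSupport
      (((hcv.fderiv (𝕜 := ℝ)).comp_left (g := fun ℓ : ℂ →L[ℝ] ℝ => ℓ 1) rfl).mul_right)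
  have cancel : ∫ x,
      ((fderiv ℝ ψ x 1).re * (fderiv ℝ ψ x I).im - (fderiv ℝ ψ x 1).im * (fderiv ℝ ψ x I).re)
      = 0 := by
    have hrw : (fun x =>
        (fderiv ℝ ψ x 1).re * (fderiv ℝ ψ x I).im - (fderiv ℝ ψ x 1).im * (fderiv ℝ ψ x I).re)
        = fun x => fderiv ℝ u x 1 * fderiv ℝ v x I - fderiv ℝ v x 1 * fderiv ℝ u x I := by
      funext x
      rw [hud x 1, hud x I, hvd x 1, hvd x I]
    rw [hrw, integral_sub hint_uv hint_vu, cross_integral u v hu hv hcu hcv, sub_eq_zero]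
    simp only [mul_comm]
  -- the main pointwise + integral identity
  have hID : ∫ x, ‖fderiv ℝ ψ x 1 - I * fderiv ℝ ψ x I‖ ^ 2
      = ∫ x, (‖fderiv ℝ ψ x 1‖ ^ 2 + ‖fderiv ℝ ψ x I‖ ^ 2) := by
    have hrw : (fun x => ‖fderiv ℝ ψ x 1 - I * fderiv ℝ ψ x I‖ ^ 2)
        = fun x => (‖fderiv ℝ ψ x 1‖ ^ 2 + ‖fderiv ℝ ψ x I‖ ^ 2)
          + 2 * ((fderiv ℝ ψ x 1).re * (fderiv ℝ ψ x I).im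
            - (fderiv ℝ ψ x 1).im * (fderiv ℝ ψ x I).re) := by
      funext x; exact key_alg _ _
    rw [hrw, integral_add hFint (hGint.const_mul 2), integral_const_mul, cancel]
    ring
  -- rewrite the RHS of the goal
  have hRHS : (4 : ℝ) * (∫ x in Ω, ‖(1 / 2 : ℂ) * (fderiv ℝ ψ x 1 - I * fderiv ℝ ψ x I)‖ ^ 2)
      = ∫ x, ‖fderiv ℝ ψ x 1 - I * fderiv ℝ ψ x I‖ ^ 2 := by
    rw [setIntegral_eq_integral_of_forall_compl_eq_zero (fun x hx => by rw [hD0 x hx]; simp)]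
    have hrw : (fun x => ‖(1 / 2 : ℂ) * (fderiv ℝ ψ x 1 - I * fderiv ℝ ψ x I)‖ ^ 2)
        = fun x => (1 / 4 : ℝ) * ‖fderiv ℝ ψ x 1 - I * fderiv ℝ ψ x I‖ ^ 2 := by
      funext x
      rw [norm_mul]
      have : ‖(1 / 2 : ℂ)‖ = 1 / 2 := by simp
      rw [this]; ring
    rw [hrw, integral_const_mul]
    ring
  rw [← hRHS] at hID
  -- now handle the left side
  by_cases hInt : Integrable (fun x => ‖ψ x‖ ^ 2 * η x) (volume.restrict Ω)
  swap
  · rw [integral_undef hInt]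
    have h1 : (0 : ℝ) ≤ ∫ x in Ω, ‖(1 / 2 : ℂ) * (fderiv ℝ ψ x 1 - I * fderiv ℝ ψ x I)‖ ^ 2 :=
      setIntegral_nonneg hΩ.measurableSet (fun x _ => by positivity)
    linarith
  · -- split into real and imaginary parts
    have hbound : ∀ w : ℂ → ℝ, (∀ x, w x ^ 2 ≤ ‖ψ x‖ ^ 2) → Continuous w →
        Integrable (fun x => w x ^ 2 * η x) (volume.restrict Ω) := by
      intro w hw hwc
      refine hInt.mono (((hwc.pow 2).measurable.mul hη_meas).aestronglyMeasurable) ?_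
      rw [ae_restrict_iff' hΩ.measurableSet]
      filter_upwards with x hx
      rw [Real.norm_eq_abs, Real.norm_eq_abs, abs_mul, abs_mul,
        _root_.abs_of_nonneg (hη_nonneg x hx), _root_.abs_of_nonneg (sq_nonneg (w x)),
        _root_.abs_of_nonneg (sq_nonneg ‖ψ x‖)]
      exact mul_le_mul_of_nonneg_right (hw x) (hη_nonneg x hx)
    have hIu : Integrable (fun x => u x ^ 2 * η x) (volume.restrict Ω) := by
      refine hbound u (fun x => ?_) hu.continuous
      rw [norm_sq_eq']
      nlinarith [sq_nonneg (v x)]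
    have hIv : Integrable (fun x => v x ^ 2 * η x) (volume.restrict Ω) := by
      refine hbound v (fun x => ?_) hv.continuous
      rw [norm_sq_eq']
      nlinarith [sq_nonneg (u x)]
    have hsplit : ∫ x in Ω, ‖ψ x‖ ^ 2 * η x
        = (∫ x in Ω, u x ^ 2 * η x) + ∫ x in Ω, v x ^ 2 * η x := by
      rw [← integral_add hIu hIv]
      congr 1
      funext x
      rw [norm_sq_eq']
      ring
    have hHu := hHardy u hu hcu hsubu
    have hHv := hHardy v hv hcv hsubv
    -- convert the gradient set integrals to full-space integrals
    have hconv : ∀ w : ℂ → ℝ, ContDiff ℝ (⊤ : ℕ∞) w → HasCompactSupport w → tsupport w ⊆ Ω →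
        ∫ x in Ω, ‖fderiv ℝ w x‖ ^ 2 = ∫ x, ‖fderiv ℝ w x‖ ^ 2 := by
      intro w hws hwc hwΩ
      apply setIntegral_eq_integral_of_forall_compl_eq_zero
      intro x hx
      have : fderiv ℝ w x = 0 := by
        by_contra h
        exact hx (hwΩ (support_fderiv_subset (𝕜 := ℝ) (Function.mem_support.2 h)))
      rw [this]
      simp
    have hintDu : Integrable fun x => ‖fderiv ℝ u x‖ ^ 2 :=
      (show Continuous fun x => ‖fderiv ℝ u x‖ ^ 2 from hfu.continuous.norm.pow 2).integrable_of_hasCompactSupport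
        ((hcu.fderiv (𝕜 := ℝ)).comp_left (g := fun ℓ : ℂ →L[ℝ] ℝ => ‖ℓ‖ ^ 2) (by simp))
    have hintDv : Integrable fun x => ‖fderiv ℝ v x‖ ^ 2 :=
      (show Continuous fun x => ‖fderiv ℝ v x‖ ^ 2 from hfv.continuous.norm.pow 2).integrable_of_hasCompactSupport
        ((hcv.fderiv (𝕜 := ℝ)).comp_left (g := fun ℓ : ℂ →L[ℝ] ℝ => ‖ℓ‖ ^ 2) (by simp))
    have hgrad : (∫ x, ‖fderiv ℝ u x‖ ^ 2) + (∫ x, ‖fderiv ℝ v x‖ ^ 2)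
        = ∫ x, (‖fderiv ℝ ψ x 1‖ ^ 2 + ‖fderiv ℝ ψ x I‖ ^ 2) := by
      rw [← integral_add hintDu hintDv]
      congr 1
      funext x
      rw [clm_norm_sq, clm_norm_sq, hud x 1, hud x I, hvd x 1, hvd x I,
        norm_sq_eq' (fderiv ℝ ψ x 1), norm_sq_eq' (fderiv ℝ ψ x I)]
      ring
    calc ∫ x in Ω, ‖ψ x‖ ^ 2 * η x
        = (∫ x in Ω, u x ^ 2 * η x) + ∫ x in Ω, v x ^ 2 * η x := hsplit
      _ ≤ (∫ x in Ω, ‖fderiv ℝ u x‖ ^ 2) + ∫ x in Ω, ‖fderiv ℝ v x‖ ^ 2 := add_le_add hHu hHv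
      _ = (∫ x, ‖fderiv ℝ u x‖ ^ 2) + ∫ x, ‖fderiv ℝ v x‖ ^ 2 := by
          rw [hconv u hu hcu hsubu, hconv v hv hcv hsubv]
      _ = ∫ x, (‖fderiv ℝ ψ x 1‖ ^ 2 + ‖fderiv ℝ ψ x I‖ ^ 2) := hgrad
      _ = 4 * ∫ x in Ω, ‖(1 / 2 : ℂ) * (fderiv ℝ ψ x 1 - I * fderiv ℝ ψ x I)‖ ^ 2 := hID.symm
end

section
/- Let Ω₁ ⊂ Ω₂ ⊂ ℂⁿ be domains and z, w ∈ Ω₁. Then |K_{Ω₁}(z,w) − K_{Ω₂}(z,w)| ≤ (K_{Ω₁}(z) − K_{Ω₂}(z)) + (K_{Ω₁}(w) − K_{Ω₂}(w)). -/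
/-!
Write `Q_K(c) = ‖K(·,z) + c K(·,w)‖²` for the Bergman norm of a combination of two kernel
functions; by the reproducing property it is a quadratic expression in `c` whose coefficients
are `K(z,z)`, `K(w,w)` and `K(z,w)`. Let `u` and `h` be these combinations for `K₁` and `K₂`.
Reproducing `h|Ω₁` by `K₁` gives `⟪u, h⟫_{L²(Ω₁)} = h(z) + c̄ h(w) = Q_{K₂}(c)`, while
`‖h‖²_{L²(Ω₁)} ≤ ‖h‖²_{L²(Ω₂)} = Q_{K₂}(c)`; hence `0 ≤ ‖u - h‖²_{L²(Ω₁)}` forces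
`Q_{K₂}(c) ≤ Q_{K₁}(c)`. For `‖c‖ = 1` this reads
`-2 Re(c (K₁ - K₂)(z,w)) ≤ (K₁ - K₂)(z,z) + (K₁ - K₂)(w,w)`, and optimizing over the phase of
`c` bounds `‖(K₁ - K₂)(z,w)‖` by half the right-hand side.
-/

open MeasureTheory ComplexConjugate

/-- `K` is the Bergman kernel of `Ω ⊆ ℂⁿ`: for each `z ∈ Ω`, `K(·,z)` belongs to the
Bergman space `A²(Ω)`, `K` is hermitian, and `K` reproduces every element of `A²(Ω)`. -/
def IsBergmanKernel {n : ℕ} (Ω : Set (Fin n → ℂ))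
    (K : (Fin n → ℂ) → (Fin n → ℂ) → ℂ) : Prop :=
  (∀ z ∈ Ω, DifferentiableOn ℂ (fun w => K w z) Ω ∧
      IntegrableOn (fun w => ‖K w z‖ ^ 2) Ω) ∧
  (∀ z ∈ Ω, ∀ w ∈ Ω, K z w = (starRingEnd ℂ) (K w z)) ∧
  (∀ f : (Fin n → ℂ) → ℂ, DifferentiableOn ℂ f Ω →
      IntegrableOn (fun w => ‖f w‖ ^ 2) Ω →
      ∀ z ∈ Ω, f z = ∫ w in Ω, f w * (starRingEnd ℂ) (K w z))

namespace MeasureTheory.MemLp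

variable {α 𝕜 : Type*} [RCLike 𝕜] [MeasurableSpace α] {μ : Measure α} {f g : α → 𝕜}

theorem inner_toLp (hf : MemLp f 2 μ) (hg : MemLp g 2 μ) :
    inner 𝕜 (hf.toLp f) (hg.toLp g) = ∫ x, g x * conj (f x) ∂μ := by
  rw [L2.inner_def]
  refine integral_congr_ae ?_
  filter_upwards [hf.coeFn_toLp, hg.coeFn_toLp] with x hfx hgx
  rw [RCLike.inner_apply, hfx, hgx]

theorem norm_toLp_sq (hf : MemLp f 2 μ) : ‖hf.toLp f‖ ^ 2 = ∫ x, ‖f x‖ ^ 2 ∂μ := by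
  rw [@norm_sq_eq_re_inner 𝕜, hf.inner_toLp hf]
  simp_rw [RCLike.mul_conj]
  norm_cast

end MeasureTheory.MemLp

theorem re_inner_le_norm_sq_of_norm_sq_le {𝕜 E : Type*} [RCLike 𝕜] [NormedAddCommGroup E]
    [InnerProductSpace 𝕜 E] {x y : E} (h : ‖x‖ ^ 2 ≤ RCLike.re (inner 𝕜 y x)) :
    RCLike.re (inner 𝕜 y x) ≤ ‖y‖ ^ 2 := by
  linarith [norm_sub_sq (𝕜 := 𝕜) y x, sq_nonneg ‖y - x‖]

theorem Complex.norm_le_of_forall_re_mul_le {d : ℂ} {r : ℝ}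
    (h : ∀ c : ℂ, ‖c‖ = 1 → (c * d).re ≤ r) : ‖d‖ ≤ r := by
  have hc : ‖Complex.exp (-(d.arg * Complex.I))‖ = 1 := by
    rw [← neg_mul, ← Complex.ofReal_neg]; exact Complex.norm_exp_ofReal_mul_I _
  have hcd : Complex.exp (-(d.arg * Complex.I)) * d = ‖d‖ := by
    rw [Complex.exp_neg, inv_mul_eq_iff_eq_mul₀ (Complex.exp_ne_zero _), mul_comm]
    exact (Complex.norm_mul_exp_arg_mul_I d).symm
  simpa [hcd] using h _ hc

/-- `‖K(·,z) + c K(·,w)‖²` in the Bergman space (`integral_norm_sq_add_const_mul`); for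
`c = ±1` and `c = ∓i` these are the paper's `R^±(z,w)` and `I^±(z,w)`. -/
noncomputable def kernelQuadForm {E : Type*} (K : E → E → ℂ) (z w : E) (c : ℂ) : ℝ :=
  (K z z).re + ‖c‖ ^ 2 * (K w w).re + 2 * (c * K z w).re

namespace IsBergmanKernel

variable {n : ℕ} {Ω : Set (Fin n → ℂ)} {K : (Fin n → ℂ) → (Fin n → ℂ) → ℂ} {z w : Fin n → ℂ}

theorem differentiableOn_add_const_mul (hK : IsBergmanKernel Ω K) (hz : z ∈ Ω) (hw : w ∈ Ω)
    (c : ℂ) :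
    DifferentiableOn ℂ (fun ζ => K ζ z + c * K ζ w) Ω :=
  (hK.1 z hz).1.add ((hK.1 w hw).1.const_mul c)

theorem memLp (hK : IsBergmanKernel Ω K) (hΩ : MeasurableSet Ω) (hz : z ∈ Ω) :
    MemLp (fun ζ => K ζ z) 2 (volume.restrict Ω) :=
  (memLp_two_iff_integrable_sq_norm
    ((hK.1 z hz).1.continuousOn.aestronglyMeasurable hΩ)).2 (hK.1 z hz).2

theorem memLp_add_const_mul (hK : IsBergmanKernel Ω K) (hΩ : MeasurableSet Ω) (hz : z ∈ Ω)
    (hw : w ∈ Ω) (c : ℂ) :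
    MemLp (fun ζ => K ζ z + c * K ζ w) 2 (volume.restrict Ω) :=
  (hK.memLp hΩ hz).add ((hK.memLp hΩ hw).const_mul c)

theorem integral_mul_conj (hK : IsBergmanKernel Ω K) {f : (Fin n → ℂ) → ℂ}
    (hfd : DifferentiableOn ℂ f Ω) (hf : MemLp f 2 (volume.restrict Ω)) (hz : z ∈ Ω) :
    ∫ ζ in Ω, f ζ * conj (K ζ z) = f z :=
  (hK.2.2 f hfd ((memLp_two_iff_integrable_sq_norm hf.1).1 hf) z hz).symm

theorem integral_mul_conj_add_const_mul (hK : IsBergmanKernel Ω K) (hΩ : MeasurableSet Ω)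
    {f : (Fin n → ℂ) → ℂ} (hfd : DifferentiableOn ℂ f Ω) (hf : MemLp f 2 (volume.restrict Ω))
    (hz : z ∈ Ω) (hw : w ∈ Ω) (c : ℂ) :
    ∫ ζ in Ω, f ζ * conj (K ζ z + c * K ζ w) = f z + conj c * f w := by
  have hiz : Integrable (fun ζ => f ζ * conj (K ζ z)) (volume.restrict Ω) :=
    hf.integrable_mul (hK.memLp hΩ hz).star
  have hiw : Integrable (fun ζ => f ζ * conj (K ζ w)) (volume.restrict Ω) :=
    hf.integrable_mul (hK.memLp hΩ hw).star
  calc ∫ ζ in Ω, f ζ * conj (K ζ z + c * K ζ w)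
      = ∫ ζ in Ω, (f ζ * conj (K ζ z) + conj c * (f ζ * conj (K ζ w))) := by
        congr 1 with ζ
        simp only [map_add, map_mul]
        ring
    _ = f z + conj c * f w := by
        rw [integral_add hiz (hiw.const_mul _), integral_const_mul,
          hK.integral_mul_conj hfd hf hz, hK.integral_mul_conj hfd hf hw]

theorem kernelQuadForm_eq_re (hK : IsBergmanKernel Ω K) (hz : z ∈ Ω) (hw : w ∈ Ω) (c : ℂ) :
    kernelQuadForm K z w c = (K z z + c * K z w + conj c * (K w z + c * K w w)).re := by
  rw [hK.2.1 w hw z hz, kernelQuadForm, Complex.sq_norm, Complex.normSq_apply]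
  simp only [Complex.add_re, Complex.add_im, Complex.mul_re, Complex.mul_im, Complex.conj_re,
    Complex.conj_im]
  ring

theorem integral_norm_sq_add_const_mul (hK : IsBergmanKernel Ω K) (hΩ : MeasurableSet Ω)
    (hz : z ∈ Ω) (hw : w ∈ Ω) (c : ℂ) :
    ∫ ζ in Ω, ‖K ζ z + c * K ζ w‖ ^ 2 = kernelQuadForm K z w c := by
  have hu := hK.integral_mul_conj_add_const_mul hΩ (hK.differentiableOn_add_const_mul hz hw c)
    (hK.memLp_add_const_mul hΩ hz hw c) hz hw c
  beta_reduce at hu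
  simp_rw [Complex.mul_conj'] at hu
  norm_cast at hu
  rw [hK.kernelQuadForm_eq_re hz hw, ← hu, Complex.ofReal_re]

theorem kernelQuadForm_le_of_subset {Ω₁ Ω₂ : Set (Fin n → ℂ)}
    {K₁ K₂ : (Fin n → ℂ) → (Fin n → ℂ) → ℂ}
    (hK₁ : IsBergmanKernel Ω₁ K₁) (hK₂ : IsBergmanKernel Ω₂ K₂) (hΩ₁ : MeasurableSet Ω₁)
    (hΩ₂ : MeasurableSet Ω₂) (h12 : Ω₁ ⊆ Ω₂) (hz : z ∈ Ω₁) (hw : w ∈ Ω₁) (c : ℂ) :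
    kernelQuadForm K₂ z w c ≤ kernelQuadForm K₁ z w c := by
  have hu := hK₁.memLp_add_const_mul hΩ₁ hz hw c
  have hh₂ := hK₂.memLp_add_const_mul hΩ₂ (h12 hz) (h12 hw) c
  have hh₁ := hh₂.mono_measure (Measure.restrict_mono h12 le_rfl)
  have hinner : RCLike.re (inner ℂ (hu.toLp _) (hh₁.toLp _)) = kernelQuadForm K₂ z w c := by
    rw [MemLp.inner_toLp, hK₁.integral_mul_conj_add_const_mul hΩ₁
      ((hK₂.differentiableOn_add_const_mul (h12 hz) (h12 hw) c).mono h12) hh₁ hz hw c,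
      hK₂.kernelQuadForm_eq_re (h12 hz) (h12 hw), RCLike.re_eq_complex_re]
  have hnorm : ‖hh₁.toLp _‖ ^ 2 ≤ kernelQuadForm K₂ z w c := by
    rw [MemLp.norm_toLp_sq, ← hK₂.integral_norm_sq_add_const_mul hΩ₂ (h12 hz) (h12 hw)]
    exact setIntegral_mono_set ((memLp_two_iff_integrable_sq_norm hh₂.1).1 hh₂)
      (.of_forall fun _ => sq_nonneg _) h12.eventuallyLE
  calc kernelQuadForm K₂ z w c = RCLike.re (inner ℂ (hu.toLp _) (hh₁.toLp _)) := hinner.symm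
    _ ≤ ‖hu.toLp _‖ ^ 2 := re_inner_le_norm_sq_of_norm_sq_le (hinner ▸ hnorm)
    _ = kernelQuadForm K₁ z w c := by
      rw [MemLp.norm_toLp_sq, hK₁.integral_norm_sq_add_const_mul hΩ₁ hz hw]

end IsBergmanKernel

theorem bergman_kernel_difference_bound_general {n : ℕ} (Ω₁ Ω₂ : Set (Fin n → ℂ))
    (hΩ₁open : IsOpen Ω₁)
    (hΩ₂open : IsOpen Ω₂)
    (h12 : Ω₁ ⊆ Ω₂)
    (K₁ K₂ : (Fin n → ℂ) → (Fin n → ℂ) → ℂ)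
    (hK₁ : IsBergmanKernel Ω₁ K₁) (hK₂ : IsBergmanKernel Ω₂ K₂)
    (z w : Fin n → ℂ) (hz : z ∈ Ω₁) (hw : w ∈ Ω₁) :
    ‖K₁ z w - K₂ z w‖
      ≤ ((K₁ z z).re - (K₂ z z).re) + ((K₁ w w).re - (K₂ w w).re) := by
  have hhalf : ‖K₁ z w - K₂ z w‖
      ≤ (((K₁ z z).re - (K₂ z z).re) + ((K₁ w w).re - (K₂ w w).re)) / 2 := by
    refine Complex.norm_le_of_forall_re_mul_le fun c hc => ?_
    have hmono := hK₁.kernelQuadForm_le_of_subset hK₂ hΩ₁open.measurableSet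
      hΩ₂open.measurableSet h12 hz hw (-c)
    simp only [kernelQuadForm, norm_neg, hc, neg_mul, Complex.neg_re, mul_sub,
      Complex.sub_re] at hmono ⊢
    linarith
  linarith [norm_nonneg (K₁ z w - K₂ z w)]

/-- If `Ω₁ ⊆ Ω₂` are domains in `ℂⁿ` and `z, w ∈ Ω₁`, then
`|K_{Ω₁}(z,w) − K_{Ω₂}(z,w)| ≤ (K_{Ω₁}(z) − K_{Ω₂}(z)) + (K_{Ω₁}(w) − K_{Ω₂}(w))`. -/
theorem bergman_kernel_difference_bound {n : ℕ} (Ω₁ Ω₂ : Set (Fin n → ℂ))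
    (hΩ₁open : IsOpen Ω₁) (hΩ₁conn : IsConnected Ω₁)
    (hΩ₂open : IsOpen Ω₂) (hΩ₂conn : IsConnected Ω₂)
    (h12 : Ω₁ ⊆ Ω₂)
    (K₁ K₂ : (Fin n → ℂ) → (Fin n → ℂ) → ℂ)
    (hK₁ : IsBergmanKernel Ω₁ K₁) (hK₂ : IsBergmanKernel Ω₂ K₂)
    (z w : Fin n → ℂ) (hz : z ∈ Ω₁) (hw : w ∈ Ω₁) :
    ‖K₁ z w - K₂ z w‖
      ≤ ((K₁ z z).re - (K₂ z z).re) + ((K₁ w w).re - (K₂ w w).re) :=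
  bergman_kernel_difference_bound_general Ω₁ Ω₂ hΩ₁open hΩ₂open h12 K₁ K₂ hK₁ hK₂ z w hz hw
end
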